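/- Let R : [ω_*, ω^*] → SO(3) be continuously differentiable, let F(t,ω) := R(ω) exp(σ(t) ω S), and let u₁, u₂ : [0, ∞) → ℝ be continuous. Suppose N : [0, ∞) × [ω_*, ω^*] → ℝ³ is continuously differentiable, has continuous mixed second partial derivative ∂²N/∂t∂ω, and satisfies ∂N/∂t(t,ω) = Σ_{i=1}^{2} u_i(t) [F(t,ω) e_i] ∧ N(t,ω) for all t ≥ 0 and ω ∈ [ω_*, ω^*]. Then the function t ↦ L(N(t,·)) is differentiable on every interval where σ is differentiable, with d/dt L(N(t,·)) = Σ_{i=1}^{2} u_i(t) H_i[t, N(t,·)]. -/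

import Mathlib

noncomputable section

open scoped RealInnerProductSpace
open Matrix Set Filter

attribute [local instance] Matrix.normedAddCommGroup Matrix.normedSpace

/-- ℝ³ with the Euclidean norm. -/
abbrev E3 : Type := EuclideanSpace ℝ (Fin 3)

/-- First canonical basis vector of ℝ³. -/
def e1 : E3 := EuclideanSpace.single 0 1
/-- Second canonical basis vector of ℝ³. -/
def e2 : E3 := EuclideanSpace.single 1 1
/-- Third canonical basis vector of ℝ³. -/
def e3 : E3 := EuclideanSpace.single 2 1

/-- Cross (wedge) product on ℝ³. -/
def cross (x y : E3) : E3 :=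
  (WithLp.equiv 2 (Fin 3 → ℝ)).symm
    (crossProduct ((WithLp.equiv 2 (Fin 3 → ℝ)) x) ((WithLp.equiv 2 (Fin 3 → ℝ)) y))

/-- Action of a 3×3 real matrix on ℝ³. -/
def act (A : Matrix (Fin 3) (Fin 3) ℝ) (x : E3) : E3 := Matrix.toEuclideanLin A x

/-- Operator norm of a 3×3 real matrix w.r.t. the Euclidean norm. -/
def opNorm (A : Matrix (Fin 3) (Fin 3) ℝ) : ℝ :=
  ‖(LinearMap.toContinuousLinearMap (Matrix.toEuclideanLin A))‖

/-- `A ∈ SO(3)`. -/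
def IsSO (A : Matrix (Fin 3) (Fin 3) ℝ) : Prop := Aᵀ * A = 1 ∧ A.det = 1

/-- The matrix S with rows (0,1,0), (−1,0,0), (0,0,0). -/
def Smat : Matrix (Fin 3) (Fin 3) ℝ := !![0,1,0; -1,0,0; 0,0,0]

/-- Matrix exponential. -/
def expm (A : Matrix (Fin 3) (Fin 3) ℝ) : Matrix (Fin 3) (Fin 3) ℝ := NormedSpace.exp A

/-- The switching function σ(t) = ∫₀ᵗ (−1)^⌊s/T⌋ ds. -/
def sigma (T t : ℝ) : ℝ := ∫ s in (0:ℝ)..t, ((-1 : ℝ) ^ (⌊s / T⌋))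

/-- F(t,ω) = R(ω) exp(σ(t) ω S). -/
def Fmat (R : ℝ → Matrix (Fin 3) (Fin 3) ℝ) (T t ω : ℝ) : Matrix (Fin 3) (Fin 3) ℝ :=
  R ω * expm ((sigma T t * ω) • Smat)

/-- ∂F/∂ω(t,ω) = R′(ω) exp(σ(t) ω S) + σ(t) R(ω) S exp(σ(t) ω S). -/
def Fmatω (R R' : ℝ → Matrix (Fin 3) (Fin 3) ℝ) (T t ω : ℝ) : Matrix (Fin 3) (Fin 3) ℝ :=
  R' ω * expm ((sigma T t * ω) • Smat) + sigma T t • (R ω * (Smat * expm ((sigma T t * ω) • Smat)))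

/-- The functional H[t,N] (for basis direction `v`), where `N'` denotes dN/dω:
`H_v[t,N] = ∫ (⟨N′, (∂F/∂ω v) ∧ N⟩ + ⟨e₃, (F v) ∧ N⟩) dω`. -/
def Hfun (a b : ℝ) (R R' : ℝ → Matrix (Fin 3) (Fin 3) ℝ) (T t : ℝ)
    (N N' : ℝ → E3) (v : E3) : ℝ :=
  ∫ ω in a..b, (⟪N' ω, cross (act (Fmatω R R' T t ω) v) (N ω)⟫
    + ⟪e3, cross (act (Fmat R T t ω) v) (N ω)⟫)

/-- The Lyapunov functional L(N) = ∫ (½‖N′‖² + 1 + ⟨N, e₃⟩) dω. -/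
def Lfun (a b : ℝ) (N N' : ℝ → E3) : ℝ :=
  ∫ ω in a..b, ((1/2) * ‖N' ω‖^2 + 1 + ⟪N ω, e3⟫)

end

/-!
Write `ℓ(t,ω) = ½‖∂_ω N‖² + 1 + ⟨N, e₃⟩` for the density of `L`. Along a solution of
`∂_t N = X ∧ N`, with `X = Σ uᵢ F eᵢ`, its time derivative is `⟨∂_ω N, ∂_t ∂_ω N⟩ + ⟨X ∧ N, e₃⟩`.
Schwarz's theorem turns `∂_t ∂_ω N` into `∂_ω (X ∧ N) = ∂_ω X ∧ N + X ∧ ∂_ω N`, and the last term is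
orthogonal to `∂_ω N`; what remains is the integrand of `Σ uᵢ Hᵢ`, since `H` is linear in `eᵢ`.
Only continuity of the partial derivatives is available, so Schwarz's theorem and the
differentiation under the integral sign are both proved by integrating: the mixed partials have the
same integral over every rectangle `[c,t] × [a,ω]` (Fubini for continuous functions), and
`L(N(t,·)) - L(N(c,·))` is the time integral of `∫ ∂_t ℓ dω`.
-/

section IntervalCalculus

open Set Filter MeasureTheory intervalIntegral Function

theorem ContinuousOn.uncurry_flip {α β γ : Type*} [TopologicalSpace α] [TopologicalSpace β]
    [TopologicalSpace γ] {f : α → β → γ} {s : Set α} {t : Set β}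
    (hf : ContinuousOn (uncurry f) (s ×ˢ t)) : ContinuousOn (uncurry fun y x => f x y) (t ×ˢ s) :=
  hf.comp continuous_swap.continuousOn fun _ hp => ⟨hp.2, hp.1⟩

variable {E : Type*} [NormedAddCommGroup E] [NormedSpace ℝ E]

theorem continuousOn_intervalIntegral_of_continuousOn_prod {f : ℝ → ℝ → E} {P : Set ℝ}
    {a b : ℝ} (hP : IsCompact P) (hab : a ≤ b) (hf : ContinuousOn (uncurry f) (P ×ˢ Icc a b)) :
    ContinuousOn (fun p => ∫ x in a..b, f p x) P := by
  obtain ⟨C, hC⟩ := (hP.prod isCompact_Icc).exists_bound_of_continuousOn hf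
  simp only [integral_of_le hab]
  refine continuousOn_of_dominated (bound := fun _ => C)
    (fun p hp => ((hf.uncurry_left p hp).mono Ioc_subset_Icc_self).aestronglyMeasurable
      measurableSet_Ioc)
    (fun p hp => (ae_restrict_iff' measurableSet_Ioc).2 <| .of_forall fun x hx =>
      hC (p, x) ⟨hp, Ioc_subset_Icc_self hx⟩)
    (integrableOn_const measure_Ioc_lt_top.ne)
    ((ae_restrict_iff' measurableSet_Ioc).2 <| .of_forall fun x hx =>
      hf.uncurry_right x (Ioc_subset_Icc_self hx))

theorem integral_integral_swap_of_continuousOn {f : ℝ → ℝ → E} {a b c d : ℝ}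
    (hcd : c ≤ d) (hab : a ≤ b) (hf : ContinuousOn (uncurry f) (Icc c d ×ˢ Icc a b)) :
    ∫ s in c..d, ∫ x in a..b, f s x = ∫ x in a..b, ∫ s in c..d, f s x := by
  simp only [integral_of_le hcd, integral_of_le hab]
  refine integral_integral_swap ?_
  rw [Measure.prod_restrict]
  exact (hf.integrableOn_compact (isCompact_Icc.prod isCompact_Icc)).mono_set
    (prod_mono Ioc_subset_Icc_self Ioc_subset_Icc_self)

variable [CompleteSpace E]

theorem integral_eq_sub_of_hasDerivWithinAt_of_Icc_subset {f f' : ℝ → E} {c d : ℝ} {s : Set ℝ}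
    (hcd : c ≤ d) (hs : Icc c d ⊆ s) (hf : ∀ x ∈ Icc c d, HasDerivWithinAt f (f' x) s x)
    (hf' : IntervalIntegrable f' volume c d) :
    ∫ x in c..d, f' x = f d - f c :=
  integral_eq_sub_of_hasDerivAt_of_le hcd
    (fun x hx => ((hf x hx).continuousWithinAt).mono hs)
    (fun x hx => (hf x (Ioo_subset_Icc_self hx)).hasDerivAt
      (mem_of_superset (Icc_mem_nhds hx.1 hx.2) hs)) hf'

theorem hasDerivWithinAt_integral_of_continuousOn_Icc {f : ℝ → E} {c d t : ℝ}
    (hf : ContinuousOn f (Icc c d)) (ht : t ∈ Icc c d) :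
    HasDerivWithinAt (fun s => ∫ x in c..s, f x) (f t) (Icc c d) t :=
  have : Fact (t ∈ Icc c d) := ⟨ht⟩
  integral_hasDerivWithinAt_right
    ((hf.mono (Icc_subset_Icc_right ht.2)).intervalIntegrable_of_Icc ht.1)
    (hf.stronglyMeasurableAtFilter_nhdsWithin measurableSet_Icc t) (hf t ht)

theorem eqOn_of_forall_integral_eq {f g : ℝ → E} {c d : ℝ} (hcd : c < d)
    (hf : ContinuousOn f (Icc c d)) (hg : ContinuousOn g (Icc c d))
    (hfg : ∀ t ∈ Icc c d, ∫ x in c..t, f x = ∫ x in c..t, g x) :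
    EqOn f g (Icc c d) := fun t ht =>
  (uniqueDiffOn_Icc hcd t ht).eq_deriv _ (hasDerivWithinAt_integral_of_continuousOn_Icc hf ht)
    ((hasDerivWithinAt_integral_of_continuousOn_Icc hg ht).congr hfg (hfg t ht))

theorem eqOn_of_forall_integral_integral_eq {f g : ℝ → ℝ → E} {a b c d : ℝ}
    (hcd : c < d) (hab : a < b)
    (hf : ContinuousOn (uncurry f) (Icc c d ×ˢ Icc a b))
    (hg : ContinuousOn (uncurry g) (Icc c d ×ˢ Icc a b))
    (hfg : ∀ t ∈ Icc c d, ∀ ω ∈ Icc a b,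
      ∫ x in a..ω, ∫ s in c..t, f s x = ∫ x in a..ω, ∫ s in c..t, g s x) :
    EqOn (uncurry f) (uncurry g) (Icc c d ×ˢ Icc a b) := by
  have hprimitive {h : ℝ → ℝ → E} (hh : ContinuousOn (uncurry h) (Icc c d ×ˢ Icc a b))
      (t : ℝ) (ht : t ∈ Icc c d) : ContinuousOn (fun x => ∫ s in c..t, h s x) (Icc a b) :=
    continuousOn_intervalIntegral_of_continuousOn_prod isCompact_Icc ht.1 <|
      hh.uncurry_flip.mono (prod_mono le_rfl (Icc_subset_Icc_right ht.2))
  have hinner (t) (ht : t ∈ Icc c d) :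
      EqOn (fun x => ∫ s in c..t, f s x) (fun x => ∫ s in c..t, g s x) (Icc a b) :=
    eqOn_of_forall_integral_eq hab (hprimitive hf t ht) (hprimitive hg t ht) (hfg t ht)
  rintro ⟨t, ω⟩ ⟨ht, hω⟩
  exact eqOn_of_forall_integral_eq hcd (hf.uncurry_right ω hω) (hg.uncurry_right ω hω)
    (fun t' ht' => hinner t' ht' hω) ht

theorem integral_integral_eq_of_hasDerivWithinAt {f fx fxy : ℝ → ℝ → E} {p q r s : ℝ}
    {S T : Set ℝ} (hpq : p ≤ q) (hrs : r ≤ s) (hS : Icc p q ⊆ S) (hT : Icc r s ⊆ T)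
    (hfx : ∀ x ∈ Icc p q, ∀ y ∈ Icc r s, HasDerivWithinAt (f · y) (fx x y) S x)
    (hfxy : ∀ x ∈ Icc p q, ∀ y ∈ Icc r s, HasDerivWithinAt (fx x) (fxy x y) T y)
    (hfx_cont : ContinuousOn (uncurry fx) (Icc p q ×ˢ Icc r s))
    (hfxy_cont : ContinuousOn (uncurry fxy) (Icc p q ×ˢ Icc r s)) :
    ∫ x in p..q, ∫ y in r..s, fxy x y = (f q s - f p s) - (f q r - f p r) := by
  have houter (y) (hy : y ∈ Icc r s) : ∫ x in p..q, fx x y = f q y - f p y :=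
    integral_eq_sub_of_hasDerivWithinAt_of_Icc_subset hpq hS (fun x hx => hfx x hx y hy)
      ((hfx_cont.uncurry_right y hy).intervalIntegrable_of_Icc hpq)
  have hinner : EqOn (fun x => ∫ y in r..s, fxy x y) (fun x => fx x s - fx x r) (uIcc p q) :=
    fun x hx => integral_eq_sub_of_hasDerivWithinAt_of_Icc_subset hrs hT
      (hfxy x (by rwa [uIcc_of_le hpq] at hx))
      ((hfxy_cont.uncurry_left x (by rwa [uIcc_of_le hpq] at hx)).intervalIntegrable_of_Icc hrs)
  have hs : s ∈ Icc r s := right_mem_Icc.2 hrs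
  have hr : r ∈ Icc r s := left_mem_Icc.2 hrs
  rw [integral_congr hinner, integral_sub
    ((hfx_cont.uncurry_right s hs).intervalIntegrable_of_Icc hpq)
    ((hfx_cont.uncurry_right r hr).intervalIntegrable_of_Icc hpq), houter s hs, houter r hr]

theorem eqOn_mixed_partials {N N₁ N₂ N₁₂ N₂₁ : ℝ → ℝ → E} {a b c : ℝ} (hab : a < b)
    (hN₁ : ∀ t ∈ Ici c, ∀ ω ∈ Icc a b, HasDerivWithinAt (N · ω) (N₁ t ω) (Ici c) t)
    (hN₂ : ∀ t ∈ Ici c, ∀ ω ∈ Icc a b, HasDerivWithinAt (N t) (N₂ t ω) (Icc a b) ω)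
    (hN₁₂ : ∀ t ∈ Ici c, ∀ ω ∈ Icc a b, HasDerivWithinAt (N₁ t) (N₁₂ t ω) (Icc a b) ω)
    (hN₂₁ : ∀ t ∈ Ici c, ∀ ω ∈ Icc a b, HasDerivWithinAt (N₂ · ω) (N₂₁ t ω) (Ici c) t)
    (hN₁c : ContinuousOn (uncurry N₁) (Ici c ×ˢ Icc a b))
    (hN₂c : ContinuousOn (uncurry N₂) (Ici c ×ˢ Icc a b))
    (hN₁₂c : ContinuousOn (uncurry N₁₂) (Ici c ×ˢ Icc a b))
    (hN₂₁c : ContinuousOn (uncurry N₂₁) (Ici c ×ˢ Icc a b)) :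
    EqOn (uncurry N₁₂) (uncurry N₂₁) (Ici c ×ˢ Icc a b) := by
  rintro ⟨t, ω⟩ ⟨ht, hω⟩
  have hsub : Icc c (t + 1) ×ˢ Icc a b ⊆ Ici c ×ˢ Icc a b := prod_mono Icc_subset_Ici_self le_rfl
  refine eqOn_of_forall_integral_integral_eq (lt_add_of_le_of_pos ht one_pos) hab
    (hN₁₂c.mono hsub) (hN₂₁c.mono hsub) (fun t' ht' ω' hω' => ?_) ⟨⟨ht, by linarith⟩, hω⟩
  have hT : Icc c t' ⊆ Ici c := Icc_subset_Ici_self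
  have hW : Icc a ω' ⊆ Icc a b := Icc_subset_Icc_right hω'.2
  have hR : Icc c t' ×ˢ Icc a ω' ⊆ Ici c ×ˢ Icc a b := prod_mono hT hW
  rw [← integral_integral_swap_of_continuousOn ht'.1 hω'.1 (hN₁₂c.mono hR),
    integral_integral_eq_of_hasDerivWithinAt ht'.1 hω'.1 hT hW
      (fun x hx y hy => hN₁ x (hT hx) y (hW hy)) (fun x hx y hy => hN₁₂ x (hT hx) y (hW hy))
      (hN₁c.mono hR) (hN₁₂c.mono hR),
    integral_integral_eq_of_hasDerivWithinAt (f := fun ω t => N t ω) (fx := fun ω t => N₂ t ω)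
      hω'.1 ht'.1 hW hT
      (fun x hx y hy => hN₂ y (hT hy) x (hW hx)) (fun x hx y hy => hN₂₁ y (hT hy) x (hW hx))
      (hN₂c.mono hR).uncurry_flip (hN₂₁c.mono hR).uncurry_flip]
  abel

theorem hasDerivWithinAt_integral_of_hasDerivWithinAt_Ici {f g : ℝ → ℝ → E} {a b c t : ℝ}
    (hab : a ≤ b) (hf : ∀ s ∈ Ici c, ∀ ω ∈ Icc a b, HasDerivWithinAt (f · ω) (g s ω) (Ici c) s)
    (hg : ContinuousOn (uncurry g) (Ici c ×ˢ Icc a b))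
    (hfc : IntervalIntegrable (f c) volume a b) (ht : t ∈ Ici c) :
    HasDerivWithinAt (fun s => ∫ ω in a..b, f s ω) (∫ ω in a..b, g t ω) (Ici c) t := by
  have hsub (d) : Icc c d ×ˢ Icc a b ⊆ Ici c ×ˢ Icc a b := prod_mono Icc_subset_Ici_self le_rfl
  have hprimitive (s) (hs : c ≤ s) :
      ∫ ω in a..b, f s ω = (∫ ω in a..b, f c ω) + ∫ y in c..s, ∫ ω in a..b, g y ω := by
    have hftc : EqOn (f s) (fun ω => f c ω + ∫ y in c..s, g y ω) (uIcc a b) := fun ω hω => by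
      rw [uIcc_of_le hab] at hω
      dsimp only
      rw [integral_eq_sub_of_hasDerivWithinAt_of_Icc_subset hs Icc_subset_Ici_self
        (fun y hy => hf y hy.1 ω hω)
        (((hg.mono (hsub s)).uncurry_right ω hω).intervalIntegrable_of_Icc hs), add_sub_cancel]
    rw [integral_congr hftc, integral_add hfc
      ((continuousOn_intervalIntegral_of_continuousOn_prod isCompact_Icc hs
        (hg.mono (hsub s)).uncurry_flip).intervalIntegrable_of_Icc hab),
      integral_integral_swap_of_continuousOn hs hab (hg.mono (hsub s))]
  have hψ : ContinuousOn (fun s => ∫ ω in a..b, g s ω) (Icc c (t + 1)) :=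
    continuousOn_intervalIntegral_of_continuousOn_prod isCompact_Icc hab (hg.mono (hsub _))
  have hd : HasDerivWithinAt (fun s => ∫ ω in a..b, f s ω) (∫ ω in a..b, g t ω)
      (Icc c (t + 1)) t :=
    ((hasDerivWithinAt_integral_of_continuousOn_Icc hψ ⟨ht, by linarith⟩).const_add
      (∫ ω in a..b, f c ω)).congr (fun s hs => hprimitive s hs.1) (hprimitive t ht)
  rw [← Ici_inter_Iic] at hd
  exact (hasDerivWithinAt_inter (Iic_mem_nhds (lt_add_one t))).1 hd

end IntervalCalculus

section OperatorNorm

open Filter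

/- The operator norm makes `expm` the exponential of a normed algebra; slopes and continuity only
see the topology, which it shares with the entrywise norm of the statement. -/
attribute [local instance] Matrix.linftyOpNormedRing Matrix.linftyOpNormedAlgebra

theorem continuous_expm : Continuous expm := NormedSpace.exp_continuous

theorem tendsto_slope_expm_smul (A : Matrix (Fin 3) (Fin 3) ℝ) (c t : ℝ) :
    Tendsto (slope (fun u => expm ((c * u) • A)) t) (nhdsWithin t {t}ᶜ)
      (nhds (c • (A * expm ((c * t) • A)))) :=
  hasDerivAt_iff_tendsto_slope.1 <| (hasDerivAt_exp_smul_const' A (c * t)).scomp t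
    ((hasDerivAt_id t).const_mul c |>.congr_deriv (mul_one c))

end OperatorNorm

noncomputable section

open scoped RealInnerProductSpace
open Matrix Set Filter MeasureTheory Function

attribute [local instance] Matrix.normedAddCommGroup Matrix.normedSpace

theorem hasDerivAt_expm_smul (A : Matrix (Fin 3) (Fin 3) ℝ) (c t : ℝ) :
    HasDerivAt (fun u => expm ((c * u) • A)) (c • (A * expm ((c * t) • A))) t :=
  hasDerivAt_iff_tendsto_slope.2 (tendsto_slope_expm_smul A c t)

theorem sigma_continuous (T : ℝ) : Continuous (sigma T) :=
  intervalIntegral.continuous_primitive (fun _ _ =>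
    (intervalIntegrable_const (c := (1 : ℝ))).mono_fun
      (measurable_from_top.comp (measurable_id.div_const T).floor).aestronglyMeasurable
      (.of_forall fun s => by simp)) 0

def crossL : E3 →L[ℝ] E3 →L[ℝ] E3 :=
  (LinearMap.mk₂ ℝ cross
    (fun x y z => by simp [cross, map_add])
    (fun c x y => by simp [cross, _root_.map_smul])
    (fun x y z => by simp [cross, map_add])
    (fun c x y => by simp [cross, _root_.map_smul])).toContinuousBilinearMap

def actL : Matrix (Fin 3) (Fin 3) ℝ →L[ℝ] E3 →L[ℝ] E3 :=
  Matrix.toEuclideanLin.toLinearMap.toContinuousBilinearMap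

def mulL : Matrix (Fin 3) (Fin 3) ℝ →L[ℝ] Matrix (Fin 3) (Fin 3) ℝ →L[ℝ] Matrix (Fin 3) (Fin 3) ℝ :=
  (LinearMap.mul ℝ (Matrix (Fin 3) (Fin 3) ℝ)).toContinuousBilinearMap

lemma inner_cross_self (x y : E3) : ⟪y, cross x y⟫ = 0 := by
  rw [EuclideanSpace.inner_eq_star_dotProduct, dotProduct_comm]
  exact dot_cross_self _ _

lemma cross_act_smul_add_smul (A : Matrix (Fin 3) (Fin 3) ℝ) (x y : ℝ) (v w n : E3) :
    cross (act A (x • v + y • w)) n = x • cross (act A v) n + y • cross (act A w) n := by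
  change crossL (actL A (x • v + y • w)) n = x • crossL (actL A v) n + y • crossL (actL A w) n
  simp only [map_add, map_smul, _root_.add_apply, FunLike.coe_smul, Pi.smul_apply]

section Calculus

variable {α : Type*} [TopologicalSpace α] {s : Set α}

lemma ContinuousOn.cross {f g : α → E3} (hf : ContinuousOn f s) (hg : ContinuousOn g s) :
    ContinuousOn (fun x => cross (f x) (g x)) s :=
  crossL.continuous₂.comp_continuousOn (hf.prodMk hg)

lemma ContinuousOn.act {f : α → Matrix (Fin 3) (Fin 3) ℝ} {g : α → E3} (hf : ContinuousOn f s)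
    (hg : ContinuousOn g s) : ContinuousOn (fun x => act (f x) (g x)) s := by
  have h := actL.continuous₂.comp_continuousOn (hf.prodMk hg)
  exact h

variable {S : Set ℝ} {x : ℝ}

lemma HasDerivWithinAt.cross {f g : ℝ → E3} {f' g' : E3} (hf : HasDerivWithinAt f f' S x)
    (hg : HasDerivWithinAt g g' S x) :
    HasDerivWithinAt (fun y => cross (f y) (g y)) (cross (f x) g' + cross f' (g x)) S x :=
  crossL.hasDerivWithinAt_of_bilinear hf hg

lemma HasDerivWithinAt.act_const {f : ℝ → Matrix (Fin 3) (Fin 3) ℝ} {f'} (v : E3)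
    (hf : HasDerivWithinAt f f' S x) : HasDerivWithinAt (fun y => act (f y) v) (act f' v) S x :=
  (actL.flip v).hasFDerivAt.comp_hasDerivWithinAt x hf

end Calculus

section RotatingFrame

variable {R R' : ℝ → Matrix (Fin 3) (Fin 3) ℝ} {T : ℝ} {s : Set ℝ}

theorem hasDerivWithinAt_Fmat {t ω : ℝ} (hR : HasDerivWithinAt R (R' ω) s ω) :
    HasDerivWithinAt (Fmat R T t) (Fmatω R R' T t ω) s ω := by
  refine (mulL.hasDerivWithinAt_of_bilinear hR
    (hasDerivAt_expm_smul Smat (sigma T t) ω).hasDerivWithinAt).congr_deriv ?_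
  rw [map_smul, add_comm]
  rfl

theorem continuous_expm_sigma_smul (T : ℝ) :
    Continuous (fun p : ℝ × ℝ => expm ((sigma T p.1 * p.2) • Smat)) :=
  continuous_expm.comp <|
    (((sigma_continuous T).comp continuous_fst).mul continuous_snd).smul continuous_const

theorem continuousOn_Fmat (hR : ContinuousOn R s) :
    ContinuousOn (uncurry (Fmat R T)) (univ ×ˢ s) :=
  (hR.comp continuousOn_snd fun _ hp => hp.2).mul (continuous_expm_sigma_smul T).continuousOn

theorem continuousOn_Fmatω (hR : ContinuousOn R s) (hR' : ContinuousOn R' s) :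
    ContinuousOn (uncurry (Fmatω R R' T)) (univ ×ˢ s) :=
  ((hR'.comp continuousOn_snd fun _ hp => hp.2).mul (continuous_expm_sigma_smul T).continuousOn).add
    (((sigma_continuous T).comp continuous_fst).continuousOn.smul
      ((hR.comp continuousOn_snd fun _ hp => hp.2).mul
        (continuousOn_const.mul (continuous_expm_sigma_smul T).continuousOn)))

theorem Hfun_smul_add_smul {a b t : ℝ} {N N' : ℝ → E3} (hab : a ≤ b)
    (hR : ContinuousOn R (Icc a b)) (hR' : ContinuousOn R' (Icc a b))
    (hN : ContinuousOn N (Icc a b)) (hN' : ContinuousOn N' (Icc a b)) (x y : ℝ) (v w : E3) :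
    Hfun a b R R' T t N N' (x • v + y • w)
      = x * Hfun a b R R' T t N N' v + y * Hfun a b R R' T t N N' w := by
  have hint (u : E3) : IntervalIntegrable (fun ω => ⟪N' ω, cross (act (Fmatω R R' T t ω) u) (N ω)⟫
      + ⟪e3, cross (act (Fmat R T t ω) u) (N ω)⟫) volume a b :=
    ((hN'.inner ((((continuousOn_Fmatω hR hR').uncurry_left t (mem_univ t)).act
      continuousOn_const).cross hN)).add (continuousOn_const.inner
      ((((continuousOn_Fmat hR).uncurry_left t (mem_univ t)).act continuousOn_const).cross hN)))
      |>.intervalIntegrable_of_Icc hab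
  simp only [Hfun]
  rw [← intervalIntegral.integral_const_mul, ← intervalIntegral.integral_const_mul,
    ← intervalIntegral.integral_add ((hint v).const_mul x) ((hint w).const_mul y)]
  refine intervalIntegral.integral_congr fun ω _ => ?_
  simp only [cross_act_smul_add_smul, inner_add_right, real_inner_smul_right]
  ring

end RotatingFrame

theorem hasDerivWithinAt_Lfun {X Xω N Nω Ntω : ℝ → ℝ → E3} {a b c t : ℝ} (hab : a < b)
    (hX : ∀ s ∈ Ici c, ∀ ω ∈ Icc a b, HasDerivWithinAt (X s) (Xω s ω) (Icc a b) ω)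
    (hXc : ContinuousOn (uncurry X) (Ici c ×ˢ Icc a b))
    (hXωc : ContinuousOn (uncurry Xω) (Ici c ×ˢ Icc a b))
    (hNc : ContinuousOn (uncurry N) (Ici c ×ˢ Icc a b))
    (hNω : ∀ s ∈ Ici c, ∀ ω ∈ Icc a b, HasDerivWithinAt (N s) (Nω s ω) (Icc a b) ω)
    (hNωc : ContinuousOn (uncurry Nω) (Ici c ×ˢ Icc a b))
    (hNtω : ∀ s ∈ Ici c, ∀ ω ∈ Icc a b, HasDerivWithinAt (Nω · ω) (Ntω s ω) (Ici c) s)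
    (hNtωc : ContinuousOn (uncurry Ntω) (Ici c ×ˢ Icc a b))
    (hPDE : ∀ s ∈ Ici c, ∀ ω ∈ Icc a b,
      HasDerivWithinAt (N · ω) (cross (X s ω) (N s ω)) (Ici c) s)
    (ht : t ∈ Ici c) :
    HasDerivWithinAt (fun s => Lfun a b (N s) (Nω s))
      (∫ ω in a..b, (⟪Nω t ω, cross (Xω t ω) (N t ω)⟫ + ⟪e3, cross (X t ω) (N t ω)⟫))
      (Ici c) t := by
  set G : ℝ → ℝ → E3 := fun s ω => cross (X s ω) (N s ω)
  set Gω : ℝ → ℝ → E3 := fun s ω => cross (X s ω) (Nω s ω) + cross (Xω s ω) (N s ω)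
  have hGc : ContinuousOn (uncurry G) (Ici c ×ˢ Icc a b) := hXc.cross hNc
  have hmixed : EqOn (uncurry Gω) (uncurry Ntω) (Ici c ×ˢ Icc a b) :=
    eqOn_mixed_partials hab hPDE hNω
      (fun s hs ω hω => (hX s hs ω hω).cross (hNω s hs ω hω)) hNtω hGc hNωc
      ((hXc.cross hNωc).add (hXωc.cross hNc)) hNtωc
  have hdensity (s) (hs : s ∈ Ici c) (ω) (hω : ω ∈ Icc a b) :
      HasDerivWithinAt (fun s => (1/2) * ‖Nω s ω‖^2 + 1 + ⟪N s ω, e3⟫)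
        (⟪Nω s ω, Ntω s ω⟫ + ⟪G s ω, e3⟫) (Ici c) s := by
    refine ((((hNtω s hs ω hω).norm_sq).const_mul (1/2)).add_const 1).add
      ((hPDE s hs ω hω).inner ℝ (hasDerivWithinAt_const s _ e3)) |>.congr_deriv ?_
    simp only [inner_zero_right, zero_add]
    ring
  have hdensity_cont : ContinuousOn (uncurry fun s ω => ⟪Nω s ω, Ntω s ω⟫ + ⟪G s ω, e3⟫)
      (Ici c ×ˢ Icc a b) := (hNωc.inner hNtωc).add (hGc.inner continuousOn_const)
  have hdensity_int : IntervalIntegrable (fun ω => (1/2) * ‖Nω c ω‖^2 + 1 + ⟪N c ω, e3⟫)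
      volume a b :=
    ((((hNωc.uncurry_left c self_mem_Ici).norm.pow 2).const_smul (1/2 : ℝ)).add
      continuousOn_const |>.add ((hNc.uncurry_left c self_mem_Ici).inner continuousOn_const))
      |>.intervalIntegrable_of_Icc hab.le
  refine (hasDerivWithinAt_integral_of_hasDerivWithinAt_Ici hab.le hdensity hdensity_cont
    hdensity_int ht).congr_deriv (intervalIntegral.integral_congr fun ω hω => ?_)
  rw [uIcc_of_le hab.le] at hω
  have h := hmixed (mk_mem_prod ht hω)
  simp only [uncurry_apply_pair, Gω] at h
  simp only [G, ← h, inner_add_right, inner_cross_self, zero_add, real_inner_comm e3]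

theorem stmt8_general (a b : ℝ) (hab : a < b) (T : ℝ)
    (R R' : ℝ → Matrix (Fin 3) (Fin 3) ℝ)
    (hRderiv : ∀ ω ∈ Icc a b, HasDerivWithinAt R (R' ω) (Icc a b) ω)
    (hR'cont : ContinuousOn R' (Icc a b))
    (u1 u2 : ℝ → ℝ)
    (hu1 : ContinuousOn u1 (Ici 0)) (hu2 : ContinuousOn u2 (Ici 0))
    (N Nω Ntω : ℝ → ℝ → E3)
    (hNcont : ContinuousOn (fun p : ℝ × ℝ => N p.1 p.2) (Ici 0 ×ˢ Icc a b))
    (hNω : ∀ t ∈ Ici (0:ℝ), ∀ ω ∈ Icc a b, HasDerivWithinAt (N t) (Nω t ω) (Icc a b) ω)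
    (hNωcont : ContinuousOn (fun p : ℝ × ℝ => Nω p.1 p.2) (Ici 0 ×ˢ Icc a b))
    (hNtω : ∀ t ∈ Ici (0:ℝ), ∀ ω ∈ Icc a b,
      HasDerivWithinAt (fun s => Nω s ω) (Ntω t ω) (Ici 0) t)
    (hNtωcont : ContinuousOn (fun p : ℝ × ℝ => Ntω p.1 p.2) (Ici 0 ×ˢ Icc a b))
    (hPDE : ∀ t ∈ Ici (0:ℝ), ∀ ω ∈ Icc a b,
      HasDerivWithinAt (fun s => N s ω)
        (u1 t • cross (act (Fmat R T t ω) e1) (N t ω)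
          + u2 t • cross (act (Fmat R T t ω) e2) (N t ω)) (Ici 0) t) :
    ∀ t ∈ Ici (0:ℝ), DifferentiableAt ℝ (sigma T) t →
      HasDerivWithinAt (fun s => Lfun a b (N s) (Nω s))
        (u1 t * Hfun a b R R' T t (N t) (Nω t) e1
          + u2 t * Hfun a b R R' T t (N t) (Nω t) e2) (Ici 0) t := by
  intro t ht _
  have hRcont : ContinuousOn R (Icc a b) := fun ω hω => (hRderiv ω hω).continuousWithinAt
  set v : ℝ → E3 := fun s => u1 s • e1 + u2 s • e2
  have hv : ContinuousOn (fun p : ℝ × ℝ => v p.1) (Ici 0 ×ˢ Icc a b) :=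
    ((hu1.smul continuousOn_const).add (hu2.smul continuousOn_const)).comp continuousOn_fst
      fun _ hp => hp.1
  have hdom : Ici (0:ℝ) ×ˢ Icc a b ⊆ univ ×ˢ Icc a b := prod_mono (subset_univ _) le_rfl
  rw [← Hfun_smul_add_smul hab.le hRcont hR'cont (hNcont.uncurry_left t ht)
    (hNωcont.uncurry_left t ht)]
  exact hasDerivWithinAt_Lfun (X := fun s ω => act (Fmat R T s ω) (v s))
    (Xω := fun s ω => act (Fmatω R R' T s ω) (v s)) hab
    (fun s _ ω hω => (hasDerivWithinAt_Fmat (hRderiv ω hω)).act_const (v s))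
    (((continuousOn_Fmat hRcont).mono hdom).act hv)
    (((continuousOn_Fmatω hRcont hR'cont).mono hdom).act hv)
    hNcont hNω hNωcont hNtω hNtωcont
    (fun s hs ω hω => by simpa only [v, cross_act_smul_add_smul] using hPDE s hs ω hω) ht

/-- Differentiation of the Lyapunov functional along trajectories of
`∂N/∂t = Σᵢ uᵢ(t) [F(t,ω)eᵢ] ∧ N`: wherever σ is differentiable,
`d/dt L(N(t,·)) = Σᵢ uᵢ(t) Hᵢ[t, N(t,·)]`. -/
theorem stmt8 (a b : ℝ) (hab : a < b) (T : ℝ) (hT : 0 < T)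
    (R R' : ℝ → Matrix (Fin 3) (Fin 3) ℝ)
    (hRderiv : ∀ ω ∈ Icc a b, HasDerivWithinAt R (R' ω) (Icc a b) ω)
    (hR'cont : ContinuousOn R' (Icc a b))
    (hRSO : ∀ ω ∈ Icc a b, IsSO (R ω))
    (u1 u2 : ℝ → ℝ)
    (hu1 : ContinuousOn u1 (Ici 0)) (hu2 : ContinuousOn u2 (Ici 0))
    (N Nω Ntω : ℝ → ℝ → E3)
    (hNcont : ContinuousOn (fun p : ℝ × ℝ => N p.1 p.2) (Ici 0 ×ˢ Icc a b))
    (hNω : ∀ t ∈ Ici (0:ℝ), ∀ ω ∈ Icc a b, HasDerivWithinAt (N t) (Nω t ω) (Icc a b) ω)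
    (hNωcont : ContinuousOn (fun p : ℝ × ℝ => Nω p.1 p.2) (Ici 0 ×ˢ Icc a b))
    (hNtω : ∀ t ∈ Ici (0:ℝ), ∀ ω ∈ Icc a b,
      HasDerivWithinAt (fun s => Nω s ω) (Ntω t ω) (Ici 0) t)
    (hNtωcont : ContinuousOn (fun p : ℝ × ℝ => Ntω p.1 p.2) (Ici 0 ×ˢ Icc a b))
    (hPDE : ∀ t ∈ Ici (0:ℝ), ∀ ω ∈ Icc a b,
      HasDerivWithinAt (fun s => N s ω)
        (u1 t • cross (act (Fmat R T t ω) e1) (N t ω)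
          + u2 t • cross (act (Fmat R T t ω) e2) (N t ω)) (Ici 0) t) :
    ∀ t ∈ Ici (0:ℝ), DifferentiableAt ℝ (sigma T) t →
      HasDerivWithinAt (fun s => Lfun a b (N s) (Nω s))
        (u1 t * Hfun a b R R' T t (N t) (Nω t) e1
          + u2 t * Hfun a b R R' T t (N t) (Nω t) e2) (Ici 0) t :=
  stmt8_general a b hab T R R' hRderiv hR'cont u1 u2 hu1 hu2 N Nω Ntω hNcont hNω hNωcont hNtω
    hNtωcont hPDE
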